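/- Correctness of SynthSubstrings: let E be a nonempty list of examples whose fix components all have length m, let V be a set of variable indices, and let i ≤ m be an index such that two examples of E have different strings at position i of their fix components. Then SynthSubstrings(E,V,i) is exactly the set of all Sub-lr(pL,pR,l,r,Var(j)) expressions with j ∈ V such that, for every example of E, the expression evaluates to the i-th string of that example's fix when Var(j) is bound to the j-th string of that example's scmd ++ serr. -/

import Mathlib

/-! Formalization of the Fixit DSL (NoFAQ) and its synthesis algorithm. -/

/-- An example: a buggy command, an error message and a fixed command,
each given as the list of its space-separated strings. -/
structure Ex where
  cmd : List String
  err : List String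
  fix : List String
deriving DecidableEq

/-- Match expressions of the Fixit DSL. -/
inductive MatchExpr where
  | str (s : String)
  | varMatch (i : ℕ) (l r : String)
deriving DecidableEq

/-- Position expressions of the Fixit DSL. -/
inductive PosExpr where
  | ipos (k : ℤ)
  | cpos (c : Char) (k δ : ℤ)
deriving DecidableEq

/-- A Sub-lr substring-extraction expression `Sub-lr(pL, pR, l, r, Var(i))`. -/
structure SubLR where
  pL : PosExpr
  pR : PosExpr
  l : String
  r : String
  i : ℕ
deriving DecidableEq

/-- Fix expressions of the Fixit DSL. -/
inductive FixExpr where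
  | fstr (s : String)
  | sub (u : SubLR)
deriving DecidableEq

/-- Left or right position. -/
inductive Side where
  | left
  | right
deriving DecidableEq

/-- Indices of the occurrences of character `c` in string `s`, in increasing order. -/
def indices (s : String) (c : Char) : List ℕ :=
  (List.range s.length).filter (fun i => s.toList[i]? == some c)

/-- Evaluation of a position expression on a string (`d` tells whether it is used
as a left or right position).  Returns `none` when undefined. -/
def evalPos (p : PosExpr) (s : String) (d : Side) : Option ℤ :=
  match p with
  | .ipos k =>
      if 0 < k then some k
      else if k < 0 then some ((s.length : ℤ) + k)
      else
        match d with
        | .left => some 0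
        | .right => some (s.length : ℤ)
  | .cpos c k δ =>
      let I := indices s c
      if 0 < k then
        match I[k.toNat - 1]? with
        | some idx => some ((idx : ℤ) + δ)
        | none => none
      else if k < 0 then
        if 0 ≤ (I.length : ℤ) + k then
          match I[((I.length : ℤ) + k).toNat]? with
          | some idx => some ((idx : ℤ) + δ)
          | none => none
        else none
      else none

/-- `substr? s jL jR` is the substring of `s` from index `jL` (inclusive) to `jR`
(exclusive); it is undefined when an index is negative or exceeds `|s|`. -/
def substr? (s : String) (jL jR : ℤ) : Option String :=
  if 0 ≤ jL ∧ jL ≤ (s.length : ℤ) ∧ 0 ≤ jR ∧ jR ≤ (s.length : ℤ) then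
    some (String.ofList ((s.toList.drop jL.toNat).take (jR.toNat - jL.toNat)))
  else none

/-- Evaluation of a Sub-lr expression under a binding `σ`. -/
def evalSub (u : SubLR) (σ : ℕ → Option String) : Option String := do
  let s ← σ u.i
  let jL ← evalPos u.pL s .left
  let jR ← evalPos u.pR s .right
  let m ← substr? s jL jR
  return u.l ++ m ++ u.r

/-- Evaluation of a fix expression under a binding `σ`. -/
def evalFix (f : FixExpr) (σ : ℕ → Option String) : Option String :=
  match f with
  | .fstr s => some s
  | .sub u => evalSub u σ

/-- Matching one match expression against one string, producing a binding. -/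
def matchExpr (m : MatchExpr) (s : String) : Option (ℕ → Option String) :=
  match m with
  | .str t => if t = s then some (fun _ => none) else none
  | .varMatch i l r =>
      -- `s = l ++ δ ++ r` for some `δ`
      if l.isPrefixOf s && r.toList.isSuffixOf s.toList &&
          decide (l.length + r.length ≤ s.length) then
        some (fun j => if j = i then some s else none)
      else none

/-- Combination of two bindings (the first takes precedence). -/
def combine (σ1 σ2 : ℕ → Option String) : ℕ → Option String :=
  fun j => (σ1 j).orElse (fun _ => σ2 j)

/-- Unification of a list of match expressions with a list of strings. -/
def unify : List MatchExpr → List String → Option (ℕ → Option String)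
  | [], [] => some (fun _ => none)
  | m :: ms, s :: ss => do
      let σ1 ← matchExpr m s
      let σ2 ← unify ms ss
      return combine σ1 σ2
  | _, _ => none

/-- A concrete Fixit rule `match cmd and err → fix`. -/
structure Rule where
  cmd : List MatchExpr
  err : List MatchExpr
  fix : List FixExpr

/-- The semantics of a concrete Fixit rule on an input command and error message. -/
def applyRule (r : Rule) (scmd serr : List String) : Option (List String) := do
  let σ1 ← unify r.cmd scmd
  let σ2 ← unify r.err serr
  r.fix.mapM (fun f => evalFix f (combine σ1 σ2))

/-- A rule is consistent with an example when it maps the buggy command and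
error message to the fixed command. -/
def consistent (r : Rule) (e : Ex) : Prop :=
  applyRule r e.cmd e.err = some e.fix

/-- Elements of a symbolic fix list: a constant or a finite set of Sub-lr expressions. -/
inductive SymFix where
  | fstr (s : String)
  | subs (S : Finset SubLR)

/-- A symbolic rule, compactly representing a set of concrete Fixit rules. -/
structure SymbRule where
  cmd : List MatchExpr
  err : List MatchExpr
  fix : List SymFix

/-- Concretization of one symbolic fix element. -/
def conFixElem : SymFix → FixExpr → Prop
  | .fstr s, .fstr s' => s' = s
  | .subs S, .sub u => u ∈ S
  | _, _ => False

/-- Concretization of a symbolic fix list. -/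
def conFix (sf : List SymFix) (f : List FixExpr) : Prop :=
  List.Forall₂ conFixElem sf f

/-- The set of concrete rules represented by a symbolic rule. -/
def con (R : SymbRule) : Set Rule :=
  {r | r.cmd = R.cmd ∧ r.err = R.err ∧ conFix R.fix r.fix}

/-- The constant symbolic rule built from a single example. -/
def ConstRule (e : Ex) : SymbRule :=
  ⟨e.cmd.map MatchExpr.str, e.err.map MatchExpr.str, e.fix.map SymFix.fstr⟩

/-- Longest common prefix of two lists of characters. -/
def lcpList : List Char → List Char → List Char
  | a :: as, b :: bs => if a = b then a :: lcpList as bs else []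
  | _, _ => []

/-- Longest common prefix of two strings. -/
def lcpStr (s t : String) : String := String.ofList (lcpList s.toList t.toList)

/-- Longest common suffix of two strings. -/
def lcsStr (s t : String) : String := String.ofList ((lcpList s.toList.reverse t.toList.reverse).reverse)

/-- `FindVariables` introduces and refines variable match expressions so that the
match expressions also match a new input (`o` is the offset of variable indices). -/
def FindVariables : List String → List MatchExpr → ℕ → Option (List MatchExpr × Finset ℕ)
  | [], [], _ => some ([], ∅)
  | s :: ss, t :: ts, o => do
      let (ms, V) ← FindVariables ss ts (o + 1)
      match t with
      | .str s' =>
          if s' = s then some (MatchExpr.str s' :: ms, V)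
          else some (MatchExpr.varMatch o (lcpStr s' s) (lcsStr s' s) :: ms, insert o V)
      | .varMatch j l r =>
          some (MatchExpr.varMatch j (lcpStr l s) (lcsStr r s) :: ms, insert j V)
  | _, _, _ => none

/-- The binding associated with an example: variable `j` is bound to the `j`-th
string of `scmd ++ serr`. -/
def exBind (e : Ex) : ℕ → Option String := fun j => (e.cmd ++ e.err)[j]?

/-- A Sub-lr expression is consistent with example `e` at output position `i` when,
under the example's binding, it evaluates to the `i`-th string of the fix. -/
def subConsistent (u : SubLR) (e : Ex) (i : ℕ) : Prop :=
  evalSub u (exBind e) = e.fix[i]? ∧ (e.fix[i]?).isSome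

instance (u : SubLR) (e : Ex) (i : ℕ) : Decidable (subConsistent u e i) := by
  unfold subConsistent; infer_instance

/-- The integers `-n, …, n`. -/
def intRange (n : ℕ) : List ℤ :=
  (List.range (2 * n + 1)).map (fun k => (k : ℤ) - (n : ℤ))

/-- Candidate position expressions for a string `s` (complete: any position
expression defined on `s` and yielding an index in `[0, |s|]` is equivalent to
one in this list). -/
def posCands (s : String) : List PosExpr :=
  (intRange s.length).map PosExpr.ipos ++
  s.toList.flatMap (fun c =>
    (intRange s.length).flatMap (fun k =>
      (intRange s.length).map (fun δ => PosExpr.cpos c k δ)))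

/-- All prefixes of a string. -/
def prefixes (t : String) : List String :=
  (List.range (t.length + 1)).map (fun a => String.ofList (t.toList.take a))

/-- All suffixes of a string. -/
def suffixes (t : String) : List String :=
  (List.range (t.length + 1)).map (fun a => String.ofList (t.toList.drop a))

/-- Candidate Sub-lr expressions for example `e`, variables `V`, output position `i`. -/
noncomputable def subCands (e : Ex) (V : Finset ℕ) (i : ℕ) : List SubLR :=
  match e.fix[i]? with
  | none => []
  | some t =>
      V.toList.flatMap (fun j =>
        match exBind e j with
        | none => []
        | some s =>
            (posCands s).flatMap (fun pL =>
              (posCands s).flatMap (fun pR =>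
                (prefixes t).flatMap (fun l =>
                  (suffixes t).map (fun r => SubLR.mk pL pR l r j)))))

/-- `AllSubstrings e V i`: the set of all Sub-lr expressions over variables in `V`
that evaluate to the `i`-th string of `e`'s fix under `e`'s binding. -/
noncomputable def AllSubstrings (e : Ex) (V : Finset ℕ) (i : ℕ) : Finset SubLR :=
  (subCands e V i).toFinset.filter (fun u => subConsistent u e i)

/-- `SynthSubstrings (e :: E) V i`: start from `AllSubstrings e V i` and filter by
consistency with each example in `E`. -/
noncomputable def SynthSubstrings : List Ex → Finset ℕ → ℕ → Finset SubLR
  | [], _, _ => ∅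
  | e :: E, V, i =>
      E.foldl (fun F e' => F.filter (fun u => subConsistent u e' i)) (AllSubstrings e V i)

/-- Helper of `SynthFix` keeping track of the current output position. -/
noncomputable def SynthFixAux : List String → List SymFix → List Ex → Finset ℕ → ℕ → Option (List SymFix)
  | [], [], _, _, _ => some []
  | s :: S, t :: T, E, V, i => do
      let rest ← SynthFixAux S T E V (i + 1)
      match t with
      | .fstr s' =>
          if s' = s then some (SymFix.fstr s' :: rest)
          else some (SymFix.subs (SynthSubstrings E V i) :: rest)
      | .subs _ => some (SymFix.subs (SynthSubstrings E V i) :: rest)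
  | _, _, _, _, _ => none

/-- `SynthFix S T E V`: refine the symbolic fix list `T` (the `i`-th element is kept
if it is the constant `S[i]`, otherwise it becomes `SynthSubstrings E V i`). -/
noncomputable def SynthFix (S : List String) (T : List SymFix) (E : List Ex) (V : Finset ℕ) :
    Option (List SymFix) :=
  SynthFixAux S T E V 0

/-- `RefineRule r E e` refines the symbolic rule `r` (consistent with `E`) so that
it also accounts for the new example `e`. -/
noncomputable def RefineRule (r : SymbRule) (E : List Ex) (e : Ex) : Option SymbRule := do
  let (cmd', Vc) ← FindVariables e.cmd r.cmd 0
  let (err', Ve) ← FindVariables e.err r.err e.cmd.length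
  let fix' ← SynthFix e.fix r.fix (e :: E) (Vc ∪ Ve)
  some ⟨cmd', err', fix'⟩

/-- Helper of `SynthRules`: iteratively refine on each remaining example. -/
noncomputable def SynthRulesAux : SymbRule → List Ex → List Ex → Option SymbRule
  | r, _, [] => some r
  | r, seen, e :: rest => do
      let r' ← RefineRule r seen e
      SynthRulesAux r' (seen ++ [e]) rest

/-- The synthesis algorithm: start with the constant rule of the first example and
refine on each further example; `none` (⊥) if any step fails. -/
noncomputable def SynthRules : List Ex → Option SymbRule
  | [] => none
  | e :: E => SynthRulesAux (ConstRule e) [e] E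

/-- Completeness of the command-match part of a symbolic rule w.r.t. examples `E`,
producing the variables `V`. -/
def CompC (cmd : List MatchExpr) (E : List Ex) (V : Finset ℕ) : Prop :=
  ∀ i < cmd.length,
    (∀ s : String, cmd[i]? = some (MatchExpr.str s) ↔ ∀ e ∈ E, e.cmd[i]? = some s) ∧
    ((∃ l r, cmd[i]? = some (MatchExpr.varMatch i l r)) ↔
      (i ∈ V ∧ ∃ e1 ∈ E, ∃ e2 ∈ E, e1.cmd[i]? ≠ e2.cmd[i]?)) ∧
    (∀ j l r, cmd[i]? = some (MatchExpr.varMatch j l r) →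
      j = i ∧
      (∀ e ∈ E, ∀ t, e.cmd[i]? = some t → l.toList <+: t.toList) ∧
      (∀ l' : String,
        (∀ e ∈ E, ∀ t, e.cmd[i]? = some t → l'.toList <+: t.toList) →
        l'.length ≤ l.length) ∧
      (∀ e ∈ E, ∀ t, e.cmd[i]? = some t → r.toList <:+ t.toList) ∧
      (∀ r' : String,
        (∀ e ∈ E, ∀ t, e.cmd[i]? = some t → r'.toList <:+ t.toList) →
        r'.length ≤ r.length))

/-- Completeness of the error-match part of a symbolic rule w.r.t. examples `E`,
where `a` is the length of the examples' command components (the variable index at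
error position `i` is `i + a`), producing the variables `V`. -/
def CompE (a : ℕ) (err : List MatchExpr) (E : List Ex) (V : Finset ℕ) : Prop :=
  ∀ i < err.length,
    (∀ s : String, err[i]? = some (MatchExpr.str s) ↔ ∀ e ∈ E, e.err[i]? = some s) ∧
    ((∃ l r, err[i]? = some (MatchExpr.varMatch (i + a) l r)) ↔
      ((i + a) ∈ V ∧ ∃ e1 ∈ E, ∃ e2 ∈ E, e1.err[i]? ≠ e2.err[i]?)) ∧
    (∀ j l r, err[i]? = some (MatchExpr.varMatch j l r) →
      j = i + a ∧
      (∀ e ∈ E, ∀ t, e.err[i]? = some t → l.toList <+: t.toList) ∧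
      (∀ l' : String,
        (∀ e ∈ E, ∀ t, e.err[i]? = some t → l'.toList <+: t.toList) →
        l'.length ≤ l.length) ∧
      (∀ e ∈ E, ∀ t, e.err[i]? = some t → r.toList <:+ t.toList) ∧
      (∀ r' : String,
        (∀ e ∈ E, ∀ t, e.err[i]? = some t → r'.toList <:+ t.toList) →
        r'.length ≤ r.length))

/-- Input completeness of a symbolic rule. -/
def Comp (cmd err : List MatchExpr) (E : List Ex) (V : Finset ℕ) : Prop :=
  ∃ V1 V2, CompC cmd E V1 ∧ CompE cmd.length err E V2 ∧ V = V1 ∪ V2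

/-- Partial completeness of a symbolic fix list. -/
def PCompF (fixes : List SymFix) (E : List Ex) : Prop :=
  ∀ i < fixes.length,
    ∀ s : String, fixes[i]? = some (SymFix.fstr s) ↔ ∀ e ∈ E, e.fix[i]? = some s

/-- Completeness of a symbolic fix list w.r.t. examples `E` and variables `V`. -/
def CompF (fixes : List SymFix) (E : List Ex) (V : Finset ℕ) : Prop :=
  PCompF fixes E ∧
  ∀ i < fixes.length, ∀ S : Finset SubLR, fixes[i]? = some (SymFix.subs S) →
    ∀ u : SubLR, u ∈ S ↔ (u.i ∈ V ∧ ∀ e ∈ E, subConsistent u e i)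

/-- Completeness of a symbolic rule w.r.t. a list of examples. -/
def CompR (r : SymbRule) (E : List Ex) : Prop :=
  ∃ V, Comp r.cmd r.err E V ∧ CompF r.fix E V

/-- Size of an example. -/
def exSize (e : Ex) : ℕ := e.cmd.length + e.err.length + e.fix.length

/-- Size of a concrete rule. -/
def ruleSize (r : Rule) : ℕ := r.cmd.length + r.err.length + r.fix.length

/-- Maximum length of a string appearing in an example. -/
def maxLen (e : Ex) : ℕ :=
  ((e.cmd ++ e.err ++ e.fix).map String.length).foldr max 0

/-- A Sub-lr expression has small offsets when every `Cpos` position in it has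
offset `δ ∈ {-1, 0, 1}`. -/
def smallOffset (u : SubLR) : Bool :=
  (match u.pL with
    | .ipos _ => true
    | .cpos _ _ δ => δ == -1 || δ == 0 || δ == 1) &&
  (match u.pR with
    | .ipos _ => true
    | .cpos _ _ δ => δ == -1 || δ == 0 || δ == 1)

/-! Every expression consistent with an example is among that example's candidates: its two
positions evaluate into `[0, |s|]`, which bounds the integer constants of the position
expressions by `|s|`, and its constant strings `l`, `r` are a prefix and a suffix of the target.
So `AllSubstrings e V i` is exactly the set of expressions over `V` consistent with `e`, and each
filtering step of `SynthSubstrings` adds consistency with one more example. -/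

lemma mem_intRange {n : ℕ} {k : ℤ} : k ∈ intRange n ↔ -(n : ℤ) ≤ k ∧ k ≤ n := by
  simp only [intRange, List.pure_def, List.bind_eq_flatMap, List.mem_map, List.mem_flatMap,
    List.mem_singleton, List.mem_range]
  constructor
  · rintro ⟨b, ⟨a, ha, rfl⟩, rfl⟩; omega
  · rintro ⟨h1, h2⟩
    exact ⟨k + n, ⟨(k + n).toNat, by omega, by omega⟩, by omega⟩

lemma length_indices_le (s : String) (c : Char) : (indices s c).length ≤ s.length := by
  simpa [indices] using
    List.length_filter_le (fun i => s.toList[i]? == some c) (List.range s.length)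

lemma lt_length_and_mem_of_mem_indices {s : String} {c : Char} {idx : ℕ}
    (h : idx ∈ indices s c) : idx < s.length ∧ c ∈ s.toList := by
  simp only [indices, List.mem_filter, List.mem_range, beq_iff_eq,
    List.getElem?_eq_some_iff] at h
  obtain ⟨hlt, hl, hc⟩ := h
  exact ⟨hlt, hc ▸ List.getElem_mem hl⟩

lemma evalPos_ipos_eq_some {k : ℤ} {s : String} {d : Side} {j : ℤ}
    (hp : evalPos (.ipos k) s d = some j) (h0 : 0 ≤ j) (h1 : j ≤ (s.length : ℤ)) :
    -(s.length : ℤ) ≤ k ∧ k ≤ s.length := by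
  simp only [evalPos] at hp
  split_ifs at hp <;> cases d <;> cases hp <;> omega

lemma evalPos_cpos_eq_some {c : Char} {k δ : ℤ} {s : String} {d : Side} {j : ℤ}
    (hp : evalPos (.cpos c k δ) s d = some j) :
    ∃ idx ∈ indices s c, j = idx + δ ∧ -(s.length : ℤ) ≤ k ∧ k ≤ s.length := by
  have hlen := length_indices_le s c
  simp only [evalPos] at hp
  split_ifs at hp
  all_goals
    split at hp
    next idx heq =>
      cases hp
      obtain ⟨hl, he⟩ := List.getElem?_eq_some_iff.1 heq
      exact ⟨idx, he ▸ List.getElem_mem hl, rfl, by omega, by omega⟩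
    next => cases hp

lemma mem_posCands {s : String} {d : Side} {p : PosExpr} {j : ℤ}
    (hp : evalPos p s d = some j) (h0 : 0 ≤ j) (h1 : j ≤ (s.length : ℤ)) :
    p ∈ posCands s := by
  simp only [posCands, List.mem_append, List.mem_map, List.mem_flatMap]
  cases p with
  | ipos k => exact .inl ⟨k, mem_intRange.2 (evalPos_ipos_eq_some hp h0 h1), rfl⟩
  | cpos c k δ =>
    obtain ⟨idx, hidx, rfl, hk⟩ := evalPos_cpos_eq_some hp
    obtain ⟨hlt, hc⟩ := lt_length_and_mem_of_mem_indices hidx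
    exact .inr ⟨c, hc, k, mem_intRange.2 hk, δ, mem_intRange.2 ⟨by omega, by omega⟩, rfl⟩

lemma mem_prefixes {l t : String} (h : l.toList <+: t.toList) : l ∈ prefixes t := by
  simp only [prefixes, List.mem_map, List.mem_range]
  refine ⟨l.length, Nat.lt_succ_of_le h.length_le, ?_⟩
  rw [String.length, ← List.prefix_iff_eq_take.1 h, String.ofList_toList]

lemma mem_suffixes {r t : String} (h : r.toList <:+ t.toList) : r ∈ suffixes t := by
  simp only [suffixes, List.mem_map, List.mem_range]
  refine ⟨t.length - r.length, by omega, ?_⟩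
  rw [String.length, String.length, ← List.suffix_iff_eq_drop.1 h, String.ofList_toList]

lemma exists_of_evalSub_eq_some {u : SubLR} {σ : ℕ → Option String} {t : String}
    (h : evalSub u σ = some t) :
    ∃ s, σ u.i = some s ∧
      (∃ jL, evalPos u.pL s .left = some jL ∧ 0 ≤ jL ∧ jL ≤ (s.length : ℤ)) ∧
      (∃ jR, evalPos u.pR s .right = some jR ∧ 0 ≤ jR ∧ jR ≤ (s.length : ℤ)) ∧
      u.l.toList <+: t.toList ∧ u.r.toList <:+ t.toList := by
  simp only [evalSub, Option.bind_eq_bind, Option.bind_eq_some_iff] at h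
  obtain ⟨s, hs, jL, hjL, jR, hjR, mid, hmid, ht⟩ := h
  simp only [substr?] at hmid
  split_ifs at hmid with hbounds
  obtain ⟨h0L, h1L, h0R, h1R⟩ := hbounds
  have ht : t.toList = u.l.toList ++ (mid.toList ++ u.r.toList) := by
    simp [← Option.some.inj ht, String.toList_append]
  exact ⟨s, hs, ⟨jL, hjL, h0L, h1L⟩, ⟨jR, hjR, h0R, h1R⟩, ⟨_, ht.symm⟩,
    ⟨u.l.toList ++ mid.toList, by rw [ht, List.append_assoc]⟩⟩

lemma i_mem_of_mem_subCands {e : Ex} {V : Finset ℕ} {i : ℕ} {u : SubLR}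
    (h : u ∈ subCands e V i) : u.i ∈ V := by
  unfold subCands at h
  split at h
  · simp at h
  · simp only [List.mem_flatMap] at h
    obtain ⟨j, hj, hu⟩ := h
    split at hu
    · simp at hu
    · simp only [List.mem_flatMap, List.mem_map] at hu
      obtain ⟨_, _, _, _, _, _, _, _, rfl⟩ := hu
      exact Finset.mem_toList.1 hj

lemma mem_subCands_of_subConsistent {e : Ex} {V : Finset ℕ} {i : ℕ} {u : SubLR}
    (hV : u.i ∈ V) (hc : subConsistent u e i) : u ∈ subCands e V i := by
  obtain ⟨heval, hsome⟩ := hc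
  obtain ⟨t, ht⟩ := Option.isSome_iff_exists.1 hsome
  rw [ht] at heval
  obtain ⟨s, hs, ⟨jL, hjL, h0L, h1L⟩, ⟨jR, hjR, h0R, h1R⟩, hl, hr⟩ :=
    exists_of_evalSub_eq_some heval
  unfold subCands
  rw [ht]
  simp only [List.mem_flatMap]
  refine ⟨u.i, Finset.mem_toList.2 hV, ?_⟩
  rw [hs]
  simp only [List.mem_flatMap, List.mem_map]
  exact ⟨u.pL, mem_posCands hjL h0L h1L, u.pR, mem_posCands hjR h0R h1R,
    u.l, mem_prefixes hl, u.r, mem_suffixes hr, rfl⟩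

lemma mem_allSubstrings {e : Ex} {V : Finset ℕ} {i : ℕ} {u : SubLR} :
    u ∈ AllSubstrings e V i ↔ u.i ∈ V ∧ subConsistent u e i := by
  rw [AllSubstrings, Finset.mem_filter, List.mem_toFinset]
  exact ⟨fun ⟨hu, hc⟩ => ⟨i_mem_of_mem_subCands hu, hc⟩,
    fun ⟨hV, hc⟩ => ⟨mem_subCands_of_subConsistent hV hc, hc⟩⟩

lemma Finset.mem_foldl_filter {α β : Type*} (p : β → α → Prop) [∀ b, DecidablePred (p b)]
    (l : List β) (F : Finset α) (a : α) :
    a ∈ l.foldl (fun F b => F.filter (p b)) F ↔ a ∈ F ∧ ∀ b ∈ l, p b a := by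
  induction l generalizing F with
  | nil => simp
  | cons b l ih =>
    simp only [List.foldl_cons, ih, Finset.mem_filter, List.forall_mem_cons, and_assoc]

theorem synthSubstrings_correct_general (e : Ex) (E : List Ex)
    (V : Finset ℕ) (i : ℕ) :
    ∀ u : SubLR, u ∈ SynthSubstrings (e :: E) V i ↔
      (u.i ∈ V ∧ ∀ e' ∈ e :: E, subConsistent u e' i) := by
  intro u
  rw [SynthSubstrings, Finset.mem_foldl_filter (fun e' u => subConsistent u e' i),
    mem_allSubstrings, List.forall_mem_cons, and_assoc]

/-- **Correctness of SynthSubstrings.**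
For a nonempty list of examples whose fix components all have length `m`, a set `V`
of variable indices and an index `i ≤ m` at which two examples disagree,
`SynthSubstrings` returns exactly the set of all Sub-lr expressions over variables
in `V` that are consistent with every example at position `i`. -/
theorem synthSubstrings_correct (e : Ex) (E : List Ex) (m : ℕ)
    (hlen : ∀ e' ∈ e :: E, e'.fix.length = m)
    (V : Finset ℕ) (i : ℕ) (him : i ≤ m)
    (hdiff : ∃ e1 ∈ e :: E, ∃ e2 ∈ e :: E, e1.fix[i]? ≠ e2.fix[i]?) :
    ∀ u : SubLR, u ∈ SynthSubstrings (e :: E) V i ↔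
      (u.i ∈ V ∧ ∀ e' ∈ e :: E, subConsistent u e' i) :=
  synthSubstrings_correct_general e E V i
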